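/- arXiv:1609.02548 — 5 statements merged into one kernel-verified Lean document; each statement's English description precedes it below -/
import Mathlib

section
/- If G is a half-graph of height n, then the nested complexity length of G is at least n. -/
/-- `v` lies in the closed neighborhood `N[a]` of `a` in `G`. -/
def inNbhd {V : Type*} (G : SimpleGraph V) (a v : V) : Prop := a = v ∨ G.Adj a v

/-- `(b 0, …, b (n-1))` is a nested complexity sequence for `G`. -/
def IsNCS {V : Type*} (G : SimpleGraph V) (n : ℕ) (b : ℕ → V) : Prop :=
  ∀ k, k + 1 < n → ∃ a, (∀ i ≤ k, inNbhd G a (b i)) ∧ ¬ inNbhd G a (b (k + 1))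

/-- The nested complexity length of `G`: the supremum of lengths of
nested complexity sequences for `G`. -/
noncomputable def NCL {V : Type*} (G : SimpleGraph V) : ℕ∞ :=
  sSup {x : ℕ∞ | ∃ n : ℕ, x = n ∧ ∃ b : ℕ → V, IsNCS G n b}

/-! The vertices `b_1, …, b_n` of the half-graph form a nested complexity sequence:
`a_k` dominates `b_1, …, b_k` but is neither adjacent nor equal to `b_{k+1}`. -/

section

variable {V : Type*} {G : SimpleGraph V}

theorem IsNCS.le_NCL {n : ℕ} {b : ℕ → V} (h : IsNCS G n b) : (n : ℕ∞) ≤ NCL G :=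
  le_sSup ⟨n, rfl, b, h⟩

theorem isNCS_of_halfGraph {n : ℕ} (a b : ℕ → V)
    (hadj : ∀ i j, i < n → j < n → (G.Adj (a i) (b j) ↔ j ≤ i))
    (hne : ∀ k, k + 1 < n → a k ≠ b (k + 1)) : IsNCS G n b := by
  intro k hk
  refine ⟨a k, fun i hi => Or.inr ((hadj k i (by omega) (by omega)).mpr hi), ?_⟩
  rintro (heq | hab)
  · exact hne k hk heq
  · have := (hadj k (k + 1) (by omega) hk).mp hab
    omega

end

theorem stmt_2_general {V : Type*} (G : SimpleGraph V) (n : ℕ) (a b : Fin n → V)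
    (hinj : Function.Injective (Sum.elim a b : Fin n ⊕ Fin n → V))
    (hadj : ∀ i j : Fin n, G.Adj (a i) (b j) ↔ j ≤ i) :
    (n : ℕ∞) ≤ NCL G := by
  cases n with
  | zero => simp
  | succ m =>
    -- Reindex by `ℕ` through `Fin.clamp`; `IsNCS` only looks at indices below `m + 1`.
    have hclamp (i : ℕ) (hi : i < m + 1) : Fin.clamp i m = ⟨i, hi⟩ :=
      Fin.ext (min_eq_left (Nat.le_of_lt_succ hi))
    refine (isNCS_of_halfGraph (a ∘ (Fin.clamp · m)) (b ∘ (Fin.clamp · m)) ?_ ?_).le_NCL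
    · intro i j hi hj
      simp only [Function.comp_apply, hclamp i hi, hclamp j hj, hadj, Fin.mk_le_mk]
    · intro k hk heq
      rw [Function.comp_apply, Function.comp_apply, hclamp k (by omega), hclamp (k + 1) hk] at heq
      simpa using hinj (a₁ := .inl _) (a₂ := .inr _) heq

/-- If `G` is a half-graph of height `n` (vertices partitioned into `a_1,…,a_n`
and `b_1,…,b_n` with `a i` adjacent to `b j` iff `j ≤ i`), then `NCL G ≥ n`. -/
theorem stmt_2 {V : Type*} (G : SimpleGraph V) (n : ℕ) (a b : Fin n → V)
    (hinj : Function.Injective (Sum.elim a b : Fin n ⊕ Fin n → V))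
    (hsurj : Function.Surjective (Sum.elim a b : Fin n ⊕ Fin n → V))
    (hadj : ∀ i j : Fin n, G.Adj (a i) (b j) ↔ j ≤ i) :
    (n : ℕ∞) ≤ NCL G :=
  stmt_2_general G n a b hinj hadj
end

section
/- The nested complexity length of the complete multipartite graph K_r(2) (r parts, each of size 2) equals 2r. -/
section NestedComplexity

variable {V : Type*} {G : SimpleGraph V} {n : ℕ} {b : ℕ → V}

theorem IsNCS.injOn (hb : IsNCS G n b) : Set.InjOn b (Set.Iio n) := by
  have separated : ∀ i j, i < j → j < n → b i ≠ b j := by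
    intro i j hij hjn heq
    obtain ⟨a, hprefix, hnext⟩ := hb (j - 1) (by omega)
    rw [Nat.sub_add_cancel (by omega : 1 ≤ j), ← heq] at hnext
    exact hnext (hprefix i (by omega))
  intro i hi j hj heq
  rcases lt_trichotomy i j with hij | rfl | hji
  · exact absurd heq (separated i j hij hj)
  · rfl
  · exact absurd heq.symm (separated j i hji hi)

theorem IsNCS.le_card [Fintype V] (hb : IsNCS G n b) : n ≤ Fintype.card V := by
  simpa using Finset.card_le_card_of_injOn (s := Finset.range n) (t := Finset.univ) b
    (fun _ _ => Finset.mem_univ _) (hb.injOn.mono fun i hi => by simpa using hi)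

theorem isNCS_of_injOn (hG : ∀ v, ∃ a, ∀ w, inNbhd G a w ↔ w ≠ v)
    (hb : Set.InjOn b (Set.Iio n)) : IsNCS G n b := by
  intro k hk
  obtain ⟨a, ha⟩ := hG (b (k + 1))
  refine ⟨a, fun i hi => (ha _).2 fun heq => ?_, fun h => (ha _).1 h rfl⟩
  have := hb (show i < n by omega) (show k + 1 < n from hk) heq
  omega

theorem NCL_le_card [Fintype V] : NCL G ≤ Fintype.card V :=
  sSup_le <| by
    rintro x ⟨n, rfl, b, hb⟩
    exact_mod_cast hb.le_card

theorem NCL_eq_card [Fintype V] (hG : ∀ v, ∃ a, ∀ w, inNbhd G a w ↔ w ≠ v) :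
    NCL G = Fintype.card V := by
  refine le_antisymm NCL_le_card ?_
  rcases isEmpty_or_nonempty V with hV | ⟨⟨v₀⟩⟩
  · simp
  let e := (Fintype.equivFin V).symm
  let b : ℕ → V := fun n => if h : n < Fintype.card V then e ⟨n, h⟩ else v₀
  have hb : Set.InjOn b (Set.Iio (Fintype.card V)) := by
    intro i (hi : i < _) j (hj : j < _) heq
    simpa [b, hi, hj] using heq
  exact le_sSup ⟨_, rfl, b, isNCS_of_injOn hG hb⟩

end NestedComplexity

theorem completeMultipartiteGraph_fin_two_inNbhd_partner_iff {ι : Type*} (v w : Σ _ : ι, Fin 2) :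
    inNbhd (SimpleGraph.completeMultipartiteGraph fun _ : ι => Fin 2) ⟨v.1, v.2.rev⟩ w ↔ w ≠ v := by
  obtain ⟨i, x⟩ := v
  obtain ⟨j, y⟩ := w
  by_cases hij : i = j
  · subst hij
    fin_cases x <;> fin_cases y <;> simp [inNbhd]
  · simp [inNbhd, SimpleGraph.completeMultipartiteGraph, hij, Ne.symm hij]

theorem stmt_3_general (r : ℕ) :
    NCL (SimpleGraph.completeMultipartiteGraph (fun _ : Fin r => Fin 2)) = (2 * r : ℕ) := by
  rw [NCL_eq_card fun v => ⟨_, completeMultipartiteGraph_fin_two_inNbhd_partner_iff v⟩]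
  simp [Fintype.card_sigma, mul_comm]

/-- The nested complexity length of the complete multipartite graph `K_r(2)`
(`r` parts of size `2`) equals `2r`. -/
theorem stmt_3 (r : ℕ) (hr : 1 ≤ r) :
    NCL (SimpleGraph.completeMultipartiteGraph (fun _ : Fin r => Fin 2)) = (2 * r : ℕ) :=
  stmt_3_general r
end

section
/- Let G be a graph and fix m, n > 0. If G does not contain a subgraph (not necessarily induced) isomorphic to the complete bipartite graph K_{m,n}, then the nested complexity length of G is at most 2^{m+n+1} - 2. -/
/-!
The terms of a nested complexity sequence are distinct, since `b j` lies outside a closed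
neighborhood containing all earlier terms. If the sequence has more than `m + 2n` terms, the
witnesses `a_j` of the steps `m + n + j` (`j < n`) are distinct as well: `a_{j'}` dominates
`b (m+n+j+1)` for `j < j'`, and `a_j` does not. All of them dominate the `m + n` vertices
`b 0, …, b (m+n-1)`, at most `n` of which are witnesses, so the remaining `m` of them together
with the witnesses span a copy of `K_{m,n}`. Finally `m + 2n ≤ 2^{m+n+1} - 2`.
-/

theorem Finset.exists_injective_fin_mem {α : Type*} {s : Finset α} {m : ℕ} (h : m ≤ s.card) :
    ∃ x : Fin m → α, Function.Injective x ∧ ∀ i, x i ∈ s := by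
  obtain ⟨f⟩ : Nonempty (Fin m ↪ s) :=
    Function.Embedding.nonempty_of_card_le (by simpa using h)
  exact ⟨fun i => f i, Subtype.val_injective.comp f.injective, fun i => (f i).2⟩

namespace IsNCS

variable {V : Type*} {G : SimpleGraph V} {N : ℕ} {b : ℕ → V}

theorem ne_of_lt (hb : IsNCS G N b) {i j : ℕ} (hij : i < j) (hj : j < N) : b i ≠ b j := by
  intro heq
  obtain ⟨a, hdom, hsep⟩ := hb (j - 1) (by omega)
  rw [Nat.sub_add_cancel (by omega : 1 ≤ j), ← heq] at hsep
  exact hsep (hdom i (by omega))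

theorem injOn_range (hb : IsNCS G N b) : Set.InjOn b (Finset.range N) := by
  intro i hi j hj heq
  simp only [Finset.coe_range, Set.mem_Iio] at hi hj
  by_contra hne
  rcases Nat.lt_or_gt_of_ne hne with hlt | hlt
  · exact hb.ne_of_lt hlt hj heq
  · exact hb.ne_of_lt hlt hi heq.symm

theorem exists_injective_dominating {M n : ℕ} (hb : IsNCS G N b) (hN : M + n < N) :
    ∃ a : Fin n → V, Function.Injective a ∧ ∀ j, ∀ i ≤ M, inNbhd G (a j) (b i) := by
  choose a hdom hsep using fun j : Fin n => hb (M + j) (by omega)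
  refine ⟨a, .of_lt_imp_ne fun j j' hjj' heq => ?_, fun j i hi => hdom j i (by omega)⟩
  exact hsep j (heq ▸ hdom j' _ (by simp only [Fin.lt_def] at hjj'; omega))

theorem exists_completeBipartite {m n : ℕ} (hb : IsNCS G N b) (hN : m + 2 * n < N) :
    ∃ (x : Fin m → V) (y : Fin n → V),
      Function.Injective x ∧ Function.Injective y ∧
      (∀ i j, x i ≠ y j) ∧ (∀ i j, G.Adj (x i) (y j)) := by
  classical
  obtain ⟨a, ha, hdom⟩ := hb.exists_injective_dominating (M := m + n) (n := n) (by omega)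
  set P := (Finset.range (m + n)).image b \ Finset.univ.image a
  have hP : m ≤ P.card := by
    have hb_card := Finset.card_image_of_injOn <| hb.injOn_range.mono <|
      Finset.coe_subset.mpr (Finset.range_subset_range.mpr (by omega : m + n ≤ N))
    have ha_card : (Finset.univ.image a).card ≤ n := Finset.card_image_le.trans (by simp)
    have hsd : (Finset.range (m + n)).card - (Finset.univ.image a).card ≤ P.card := by
      rw [← hb_card]
      exact Finset.le_card_sdiff _ _
    rw [Finset.card_range] at hsd
    omega
  obtain ⟨x, hx, hxP⟩ := Finset.exists_injective_fin_mem hP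
  simp only [P, Finset.mem_sdiff, Finset.mem_image, Finset.mem_range, Finset.mem_univ,
    true_and, not_exists] at hxP
  refine ⟨x, a, hx, ha, fun i j h => (hxP i).2 j h.symm, fun i j => ?_⟩
  obtain ⟨⟨k, hk, hbk⟩, hna⟩ := hxP i
  rw [← hbk] at hna ⊢
  rcases hdom j k hk.le with h | h
  · exact absurd h (hna j)
  · exact h.symm

end IsNCS

theorem stmt_5_general {V : Type*} (G : SimpleGraph V) (m n : ℕ)
    (h : ¬ ∃ (x : Fin m → V) (y : Fin n → V),
        Function.Injective x ∧ Function.Injective y ∧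
        (∀ i j, x i ≠ y j) ∧ (∀ i j, G.Adj (x i) (y j))) :
    NCL G ≤ ((2 ^ (m + n + 1) - 2 : ℕ) : ℕ∞) := by
  refine sSup_le ?_
  rintro _ ⟨N, rfl, b, hb⟩
  have hN : N ≤ m + 2 * n := not_lt.mp fun hN => h (hb.exists_completeBipartite hN)
  have hpow : m + n < 2 ^ (m + n) := Nat.lt_two_pow_self
  rw [Nat.cast_le, pow_succ]
  omega

/-- If `G` contains no (not necessarily induced) copy of the complete bipartite
graph `K_{m,n}`, then `NCL G ≤ 2^{m+n+1} - 2`. -/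
theorem stmt_5 {V : Type*} (G : SimpleGraph V) (m n : ℕ) (hm : 0 < m) (hn : 0 < n)
    (h : ¬ ∃ (x : Fin m → V) (y : Fin n → V),
        Function.Injective x ∧ Function.Injective y ∧
        (∀ i j, x i ≠ y j) ∧ (∀ i j, G.Adj (x i) (y j))) :
    NCL G ≤ ((2 ^ (m + n + 1) - 2 : ℕ) : ℕ∞) :=
  stmt_5_general G m n h
end

section
/- If a graph G has finite clique number w and contains the complete multipartite graph K_r(w+1) as a subgraph, then G contains K_r(2) as an induced subgraph. -/
open Function

namespace SimpleGraph

variable {V : Type*} {G : SimpleGraph V}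

theorem CliqueFree.exists_ne_not_adj {n : ℕ} (h : G.CliqueFree n) {φ : Fin n → V}
    (hφ : Injective φ) : ∃ a b, a ≠ b ∧ ¬G.Adj (φ a) (φ b) := by
  by_contra! hall
  exact (cliqueFree_iff.mp h).false ⟨⟨φ, fun hab => hall _ _ hab⟩, hφ⟩

/-- Shrinking each part of a non-induced complete multipartite subgraph `f` to an independent set
`s i` yields an induced one. -/
theorem injective_and_adj_iff_of_indep {ι α β : Type*} {f : ι × α → V} (hf : Injective f)
    (hadj : ∀ u v : ι × α, u.1 ≠ v.1 → G.Adj (f u) (f v))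
    {s : ι → β → α} (hs : ∀ i, Injective (s i))
    (hindep : ∀ i k l, ¬G.Adj (f (i, s i k)) (f (i, s i l))) :
    Injective (fun u : ι × β => f (u.1, s u.1 u.2)) ∧
      ∀ u v : ι × β, G.Adj (f (u.1, s u.1 u.2)) (f (v.1, s v.1 v.2)) ↔ u.1 ≠ v.1 := by
  constructor
  · rintro ⟨i, k⟩ ⟨j, l⟩ h
    obtain ⟨rfl, hkl⟩ := Prod.mk.inj (hf h)
    exact congrArg (i, ·) (hs i hkl)
  · rintro ⟨i, k⟩ ⟨j, l⟩
    refine ⟨?_, hadj (i, s i k) (j, s j l)⟩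
    rintro hG (rfl : i = j)
    exact hindep i k l hG

end SimpleGraph

open SimpleGraph in
/-- If `G` has no clique of size `w+1` and contains the complete multipartite
graph `K_r(w+1)` as a (not necessarily induced) subgraph, then `G` contains
`K_r(2)` as an induced subgraph. -/
theorem stmt_9 {V : Type*} (G : SimpleGraph V) (w r : ℕ)
    (hclique : G.CliqueFree (w + 1))
    (f : Fin r × Fin (w + 1) → V) (hf : Function.Injective f)
    (hadj : ∀ u v : Fin r × Fin (w + 1), u.1 ≠ v.1 → G.Adj (f u) (f v)) :
    ∃ g : Fin r × Fin 2 → V, Function.Injective g ∧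
      ∀ u v : Fin r × Fin 2, G.Adj (g u) (g v) ↔ u.1 ≠ v.1 := by
  choose a b hab hnadj using fun i =>
    hclique.exists_ne_not_adj (hf.comp (Prod.mk_right_injective i))
  have hindep (i : Fin r) (k l : Fin 2) :
      ¬G.Adj (f (i, ![a i, b i] k)) (f (i, ![a i, b i] l)) := by
    fin_cases k <;> fin_cases l
    all_goals simp only [Fin.zero_eta, Fin.mk_one, Matrix.cons_val_zero, Matrix.cons_val_one]
    exacts [G.loopless.irrefl _, hnadj i, fun h => hnadj i h.symm, G.loopless.irrefl _]
  exact ⟨_, injective_and_adj_iff_of_indep hf hadj (fun i => injective_pair_iff_ne.mpr (hab i))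
    hindep⟩
end

section
/- For every integer n ≥ 1 there exists a bipartite triangle-free graph G with chromatic number at most 2 and NCL(G) ≥ n, namely the bipartite half-graph H_n. -/
/-- The bipartite half-graph `H_n`: `a i` adjacent to `b j` iff `j ≤ i`. -/
def halfGraph (n : ℕ) : SimpleGraph (Fin n ⊕ Fin n) :=
  SimpleGraph.fromRel (fun u v => ∃ i j, u = Sum.inl i ∧ v = Sum.inr j ∧ j ≤ i)

open SimpleGraph

theorem le_NCL_of_isNCS {V : Type*} {G : SimpleGraph V} {n : ℕ} {b : ℕ → V} (h : IsNCS G n b) :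
    (n : ℕ∞) ≤ NCL G :=
  le_sSup ⟨n, rfl, b, h⟩

@[simp]
lemma halfGraph_adj_inl_inr {n : ℕ} (i j : Fin n) :
    (halfGraph n).Adj (Sum.inl i) (Sum.inr j) ↔ j ≤ i := by
  simp [halfGraph]

lemma halfGraph_le_completeBipartiteGraph (n : ℕ) :
    halfGraph n ≤ completeBipartiteGraph (Fin n) (Fin n) := by
  rintro u v ⟨-, ⟨i, j, rfl, rfl, -⟩ | ⟨i, j, rfl, rfl, -⟩⟩ <;> simp

lemma halfGraph_colorable_two (n : ℕ) : (halfGraph n).Colorable 2 := by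
  simpa using
    (CompleteBipartiteGraph.bicoloring (Fin n) (Fin n)).colorable.mono_left
      (halfGraph_le_completeBipartiteGraph n)

/-- The clamp at `n - 1` only makes the sequence total. -/
lemma halfGraph_isNCS (n : ℕ) (hn : 1 ≤ n) :
    IsNCS (halfGraph n) n (fun k => Sum.inr ⟨min k (n - 1), by omega⟩) := by
  intro k hk
  refine ⟨Sum.inl ⟨k, by omega⟩, fun i hi => Or.inr ?_, ?_⟩
  · simp only [halfGraph_adj_inl_inr, Fin.mk_le_mk]
    omega
  · simp only [inNbhd, reduceCtorEq, halfGraph_adj_inl_inr, Fin.mk_le_mk, false_or]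
    omega

/-- For every `n ≥ 1` there is a `2`-colorable, triangle-free graph with
nested complexity length at least `n`, namely the bipartite half-graph `H_n`. -/
theorem stmt_15 (n : ℕ) (hn : 1 ≤ n) :
    (halfGraph n).Colorable 2 ∧ (halfGraph n).CliqueFree 3 ∧
      (n : ℕ∞) ≤ NCL (halfGraph n) :=
  ⟨halfGraph_colorable_two n, (halfGraph_colorable_two n).cliqueFree (by norm_num),
    le_NCL_of_isNCS (halfGraph_isNCS n hn)⟩
end
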